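/- arXiv:1906.10471 — 4 statements merged into one kernel-verified Lean document; each statement's English description precedes it below -/
import Mathlib

section
/- With Π := I − Uᵀ(U Uᵀ)^{-1}U as above, for any matrices O, X of compatible sizes and Y = O X + T_α U, one has Y Π = O X Π; moreover, if X Π has full row rank equal to the number of columns of O and O has full column rank, then the column span of Y Π equals the column span of O. -/
open Matrix

lemma rank_eq_card_isUnit {m : ℕ} (A : Matrix (Fin m) (Fin m) ℝ) (h : A.rank = m) :
    IsUnit A := by
  rw [← Matrix.mulVec_surjective_iff_isUnit]
  have : LinearMap.range A.mulVecLin = ⊤ := by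
    apply Submodule.eq_top_of_finrank_eq
    rw [show Module.finrank ℝ (LinearMap.range A.mulVecLin) = A.rank from rfl, h,
      Module.finrank_fin_fun]
  exact LinearMap.range_eq_top.mp this

/-- With `Π = I − Uᵀ(UUᵀ)⁻¹U` and `Y = O X + Tα U`, one has `Y P = O (X P)`;
moreover, if `X P` has full row rank `N` and `O` has full column rank `N`,
then the column span of `Y P` equals the column span of `O`. -/
theorem projected_data_span {p N m t : ℕ}
    (O : Matrix (Fin p) (Fin N) ℝ) (X : Matrix (Fin N) (Fin t) ℝ)
    (Tα : Matrix (Fin p) (Fin m) ℝ) (U : Matrix (Fin m) (Fin t) ℝ)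
    (Y : Matrix (Fin p) (Fin t) ℝ)
    (hY : Y = O * X + Tα * U) (hU : U.rank = m)
    (P : Matrix (Fin t) (Fin t) ℝ) (hP : P = 1 - Uᵀ * (U * Uᵀ)⁻¹ * U)
    (hX : (X * P).rank = N) (hO : O.rank = N) :
    Y * P = O * (X * P) ∧
      LinearMap.range (Y * P).mulVecLin = LinearMap.range O.mulVecLin := by
  have hUU : IsUnit (U * Uᵀ) := by
    apply rank_eq_card_isUnit
    rw [Matrix.rank_self_mul_transpose, hU]
  have hUUdet : IsUnit (U * Uᵀ).det := (Matrix.isUnit_iff_isUnit_det _).mp hUU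
  have hUP : U * P = 0 := by
    rw [hP, Matrix.mul_sub, Matrix.mul_one, ← Matrix.mul_assoc, ← Matrix.mul_assoc,
      Matrix.mul_nonsing_inv _ hUUdet, Matrix.one_mul, sub_self]
  have h1 : Y * P = O * (X * P) := by
    rw [hY, Matrix.add_mul, Matrix.mul_assoc, Matrix.mul_assoc, hUP, Matrix.mul_zero, add_zero]
  refine ⟨h1, ?_⟩
  have htop : LinearMap.range (X * P).mulVecLin = ⊤ := by
    apply Submodule.eq_top_of_finrank_eq
    rw [show Module.finrank ℝ (LinearMap.range (X * P).mulVecLin) = (X * P).rank from rfl,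
      hX, Module.finrank_fin_fun]
  rw [h1, Matrix.mulVecLin_mul, LinearMap.range_comp, htop, Submodule.map_top]
end

section
/- Let S = Q Λ Qᵀ be a spectral decomposition of a real symmetric N×N matrix S with the diagonal entries of Λ in non-increasing order, and let Λ_o be a fixed diagonal matrix with non-increasing diagonal entries. Then Q Λ_o Qᵀ is a best approximant of S in Frobenius norm within the set M = { V Λ_o Vᵀ : V ∈ O(N) }; that is, ‖S − Q Λ_o Qᵀ‖_F ≤ ‖S − V Λ_o Vᵀ‖_F for all V ∈ O(N). -/
/-!
Conjugating by `Qᵀ` reduces to `S = diag d`. For `W = QᵀV` orthogonal,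
`‖diag d - W diag Λo Wᵀ‖² = ‖d‖² + ‖Λo‖² - 2 tr (diag d W diag Λo Wᵀ)`, and the cross term is
`d ⬝ᵥ (W ⊙ W) Λo` with `W ⊙ W` doubly stochastic. By Birkhoff's theorem `W ⊙ W` is a convex
combination of permutation matrices, on each of which the rearrangement inequality bounds the
cross term by `∑ dᵢ Λoᵢ`, its value at `W = 1`.
-/

open Matrix

noncomputable def frobNorm {N : ℕ} (A : Matrix (Fin N) (Fin N) ℝ) : ℝ :=
  Real.sqrt (∑ i, ∑ j, (A i j) ^ 2)

namespace Matrix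

variable {m n R : Type*} [Fintype m] [Fintype n]

lemma IsSymm.mul_mul_transpose [CommSemiring R] {B : Matrix n n R} (hB : B.IsSymm)
    (W : Matrix n n R) : (W * B * Wᵀ).IsSymm := by
  simp only [IsSymm, transpose_mul, transpose_transpose, hB.eq, Matrix.mul_assoc]

lemma sum_sq_eq_trace_transpose_mul_self [CommSemiring R] (A : Matrix m n R) :
    ∑ i, ∑ j, A i j ^ 2 = trace (Aᵀ * A) := by
  rw [Finset.sum_comm]
  simp [trace, mul_apply, sq]

lemma trace_transpose_mul_self_sub [CommRing R] {A C : Matrix n n R} (hA : A.IsSymm)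
    (hC : C.IsSymm) :
    trace ((A - C)ᵀ * (A - C)) = trace (Aᵀ * A) + trace (Cᵀ * C) - 2 * trace (A * C) := by
  rw [transpose_sub, hA.eq, hC.eq, sub_mul, mul_sub, mul_sub, trace_sub, trace_sub, trace_sub,
    trace_mul_comm C A]
  ring

variable [DecidableEq n]

lemma trace_transpose_mul_self_conj {U : Matrix n n ℝ} (hU : U ∈ orthogonalGroup n ℝ)
    (A : Matrix n n ℝ) : trace ((U * A * Uᵀ)ᵀ * (U * A * Uᵀ)) = trace (Aᵀ * A) := by
  have hUU : Uᵀ * U = 1 := (mem_orthogonalGroup_iff' _ _).mp hU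
  have : (U * A * Uᵀ)ᵀ * (U * A * Uᵀ) = U * (Aᵀ * A) * Uᵀ := by
    simp only [transpose_mul, transpose_transpose, Matrix.mul_assoc]
    rw [← Matrix.mul_assoc Uᵀ U, hUU, Matrix.one_mul]
  rw [this, trace_mul_cycle, ← Matrix.mul_assoc, hUU, Matrix.one_mul]

lemma dotProduct_mulVec_le_of_mem_doublyStochastic [Field R] [LinearOrder R]
    [IsStrictOrderedRing R] {a b : n → R} (hab : Monovary a b) {P : Matrix n n R}
    (hP : P ∈ doublyStochastic R n) : a ⬝ᵥ (P *ᵥ b) ≤ a ⬝ᵥ b := by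
  rw [← SetLike.mem_coe, doublyStochastic_eq_convexHull_permMatrix] at hP
  have hlin : IsLinearMap R fun M : Matrix n n R => a ⬝ᵥ (M *ᵥ b) :=
    ⟨fun M M' => by simp [add_mulVec, dotProduct_add],
      fun c M => by simp [smul_mulVec, dotProduct_smul]⟩
  refine convexHull_min ?_ (convex_halfSpace_le hlin _) hP
  rintro _ ⟨σ, rfl⟩
  simpa [permMatrix_mulVec, dotProduct] using hab.sum_mul_comp_perm_le_sum_mul (σ := σ)

lemma hadamard_self_mem_doublyStochastic {W : Matrix n n ℝ} (hW : W ∈ orthogonalGroup n ℝ) :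
    W ⊙ W ∈ doublyStochastic ℝ n := by
  rw [mem_doublyStochastic_iff_sum]
  refine ⟨fun i j => mul_self_nonneg (W i j), fun i => ?_, fun j => ?_⟩
  · simpa [mul_apply, one_apply] using congr_fun₂ ((mem_orthogonalGroup_iff _ _).mp hW) i i
  · simpa [mul_apply, one_apply] using congr_fun₂ ((mem_orthogonalGroup_iff' _ _).mp hW) j j

lemma trace_diagonal_mul_conj [CommSemiring R] (d e : n → R) (W : Matrix n n R) :
    trace (diagonal d * W * diagonal e * Wᵀ) = d ⬝ᵥ ((W ⊙ W) *ᵥ e) := by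
  simp only [trace, diag, Matrix.mul_apply (M := diagonal d * W * diagonal e), mul_diagonal,
    diagonal_mul, transpose_apply, dotProduct, mulVec, hadamard_apply, Finset.mul_sum]
  exact Finset.sum_congr rfl fun i _ => Finset.sum_congr rfl fun j _ => by ring

lemma trace_diagonal_mul_conj_le {d e : n → ℝ} (hde : Monovary d e) {W : Matrix n n ℝ}
    (hW : W ∈ orthogonalGroup n ℝ) :
    trace (diagonal d * (W * diagonal e * Wᵀ)) ≤ trace (diagonal d * diagonal e) := by
  rw [← Matrix.mul_assoc, ← Matrix.mul_assoc, trace_diagonal_mul_conj, diagonal_mul_diagonal,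
    trace_diagonal]
  exact dotProduct_mulVec_le_of_mem_doublyStochastic hde (hadamard_self_mem_doublyStochastic hW)

end Matrix

lemma frobNorm_eq_sqrt_trace {N : ℕ} (A : Matrix (Fin N) (Fin N) ℝ) :
    frobNorm A = √(trace (Aᵀ * A)) := by
  rw [frobNorm, sum_sq_eq_trace_transpose_mul_self]

lemma frobNorm_conj {N : ℕ} {U : Matrix (Fin N) (Fin N) ℝ}
    (hU : U ∈ orthogonalGroup (Fin N) ℝ) (A : Matrix (Fin N) (Fin N) ℝ) :
    frobNorm (U * A * Uᵀ) = frobNorm A := by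
  rw [frobNorm_eq_sqrt_trace, frobNorm_eq_sqrt_trace, trace_transpose_mul_self_conj hU]

lemma frobNorm_diagonal_sub_le {N : ℕ} {d e : Fin N → ℝ} (hde : Monovary d e)
    {W : Matrix (Fin N) (Fin N) ℝ} (hW : W ∈ orthogonalGroup (Fin N) ℝ) :
    frobNorm (diagonal d - diagonal e) ≤ frobNorm (diagonal d - W * diagonal e * Wᵀ) := by
  rw [frobNorm_eq_sqrt_trace, frobNorm_eq_sqrt_trace]
  apply Real.sqrt_le_sqrt
  rw [trace_transpose_mul_self_sub (isSymm_diagonal d) (isSymm_diagonal e),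
    trace_transpose_mul_self_sub (isSymm_diagonal d) ((isSymm_diagonal e).mul_mul_transpose W),
    trace_transpose_mul_self_conj hW]
  linarith [trace_diagonal_mul_conj_le hde hW]

/-- Best approximant with prescribed spectrum: if `S = Q Λ Qᵀ` with both `Λ`
and `Λ_o` diagonal with non-increasing diagonals and `Q` orthogonal, then
`Q Λ_o Qᵀ` minimizes the Frobenius distance from `S` over
`M = { V Λ_o Vᵀ : V ∈ O(N) }`. -/
theorem best_isospectral_approximant {N : ℕ}
    (d Λo : Fin N → ℝ)
    (hd : ∀ i j : Fin N, i ≤ j → d j ≤ d i)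
    (hΛo : ∀ i j : Fin N, i ≤ j → Λo j ≤ Λo i)
    (Q : Matrix (Fin N) (Fin N) ℝ) (hQ : Q ∈ Matrix.orthogonalGroup (Fin N) ℝ)
    (S : Matrix (Fin N) (Fin N) ℝ) (hS : S = Q * Matrix.diagonal d * Qᵀ) :
    ∀ V ∈ Matrix.orthogonalGroup (Fin N) ℝ,
      frobNorm (S - Q * Matrix.diagonal Λo * Qᵀ) ≤
        frobNorm (S - V * Matrix.diagonal Λo * Vᵀ) := by
  intro V hV
  have hQQ : Q * Qᵀ = 1 := (mem_orthogonalGroup_iff _ _).mp hQ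
  have hQt : Qᵀ ∈ orthogonalGroup (Fin N) ℝ := by
    simpa [mem_orthogonalGroup_iff] using (mem_orthogonalGroup_iff' _ _).mp hQ
  have hS_sub : ∀ U, S - U * diagonal Λo * Uᵀ =
      Q * (diagonal d - (Qᵀ * U) * diagonal Λo * (Qᵀ * U)ᵀ) * Qᵀ := by
    intro U
    simp only [hS, Matrix.mul_sub, Matrix.sub_mul, transpose_mul, transpose_transpose,
      ← Matrix.mul_assoc, hQQ, Matrix.one_mul]
    rw [Matrix.mul_assoc _ Q, hQQ, Matrix.mul_one]
  rw [hS_sub Q, hS_sub V, frobNorm_conj hQ, frobNorm_conj hQ,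
    (mem_orthogonalGroup_iff' _ _).mp hQ, Matrix.one_mul, transpose_one, Matrix.mul_one]
  exact frobNorm_diagonal_sub_le (Antitone.monovary hd hΛo) (mul_mem hQt hV)
end

section
/- Under the assumptions of the previous statement (S closed with unique projections, M compact), the alternating-projections sequence (S_k) ⊂ M has a limit point S* ∈ M satisfying ‖S* − P_S(S*)‖ = lim_{k→∞} ‖S_k − P_S(S_k)‖; and if this limit is zero, then S* ∈ S ∩ M. -/
/-- Convergence of alternating projections: under the same setting (`S`
closed with single-valued metric projection, `M` compact), the sequence
`(S_k) ⊆ M` has a limit point `S* ∈ M` such that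
`dist (S*, P_S S*) = lim_k dist (S_k, P_S S_k)`; if this limit is zero,
then `S* ∈ S ∩ M`. -/
theorem alternating_projections_limit_point {N : ℕ}
    (S M : Set (EuclideanSpace ℝ (Fin N × Fin N)))
    (hSclosed : IsClosed S) (hSne : S.Nonempty)
    (hMcompact : IsCompact M) (hMne : M.Nonempty)
    (PS : EuclideanSpace ℝ (Fin N × Fin N) → EuclideanSpace ℝ (Fin N × Fin N))
    (hPS : ∀ x, PS x ∈ S ∧ ∀ y ∈ S, dist x (PS x) ≤ dist x y)
    (hPSuniq : ∀ x, ∀ y ∈ S, dist x y = dist x (PS x) → y = PS x)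
    (seq : ℕ → EuclideanSpace ℝ (Fin N × Fin N))
    (h0 : seq 0 ∈ M)
    (hstep : ∀ k, seq (k + 1) ∈ M ∧
      ∀ y ∈ M, dist (PS (seq k)) (seq (k + 1)) ≤ dist (PS (seq k)) y) :
    ∃ Sstar ∈ M,
      (∃ φ : ℕ → ℕ, StrictMono φ ∧
        Filter.Tendsto (seq ∘ φ) Filter.atTop (nhds Sstar)) ∧
      Filter.Tendsto (fun k => dist (seq k) (PS (seq k))) Filter.atTop
        (nhds (dist Sstar (PS Sstar))) ∧
      (dist Sstar (PS Sstar) = 0 → Sstar ∈ S ∩ M) := by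
  -- the sequence stays in M
  have hMem : ∀ k, seq k ∈ M := by
    intro k; cases k with
    | zero => exact h0
    | succ n => exact (hstep n).1
  -- dist x (PS x) = infDist x S
  have hd : ∀ x, dist x (PS x) = Metric.infDist x S := by
    intro x
    refine le_antisymm ?_ (Metric.infDist_le_dist_of_mem (hPS x).1)
    have : Nonempty S := hSne.to_subtype
    rw [Metric.infDist_eq_iInf]
    exact le_ciInf fun y => (hPS x).2 y y.2
  -- convergent subsequence
  obtain ⟨Sstar, hSstarM, φ, hφ, hconv⟩ := hMcompact.tendsto_subseq hMem
  refine ⟨Sstar, hSstarM, ⟨φ, hφ, hconv⟩, ?_, ?_⟩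
  · -- the distance sequence is antitone
    have hanti : Antitone fun k => dist (seq k) (PS (seq k)) := by
      refine antitone_nat_of_succ_le fun k => ?_
      calc dist (seq (k + 1)) (PS (seq (k + 1)))
          ≤ dist (seq (k + 1)) (PS (seq k)) := (hPS (seq (k + 1))).2 _ (hPS (seq k)).1
        _ = dist (PS (seq k)) (seq (k + 1)) := dist_comm _ _
        _ ≤ dist (PS (seq k)) (seq k) := (hstep k).2 _ (hMem k)
        _ = dist (seq k) (PS (seq k)) := dist_comm _ _
    have hbdd : BddBelow (Set.range fun k => dist (seq k) (PS (seq k))) :=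
      ⟨0, by rintro x ⟨k, rfl⟩; exact dist_nonneg⟩
    have hlim : Filter.Tendsto (fun k => dist (seq k) (PS (seq k))) Filter.atTop
        (nhds (⨅ k, dist (seq k) (PS (seq k)))) :=
      tendsto_atTop_ciInf hanti hbdd
    -- the subsequence of distances tends to dist Sstar (PS Sstar) by continuity
    have hcont : Filter.Tendsto (fun n => dist (seq (φ n)) (PS (seq (φ n)))) Filter.atTop
        (nhds (dist Sstar (PS Sstar))) := by
      have : Filter.Tendsto (fun n => Metric.infDist (seq (φ n)) S) Filter.atTop
          (nhds (Metric.infDist Sstar S)) :=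
        ((Metric.continuous_infDist_pt S).continuousAt).tendsto.comp hconv
      simpa only [hd] using this
    have hsub : Filter.Tendsto (fun n => dist (seq (φ n)) (PS (seq (φ n)))) Filter.atTop
        (nhds (⨅ k, dist (seq k) (PS (seq k)))) :=
      hlim.comp hφ.tendsto_atTop
    have := tendsto_nhds_unique hsub hcont
    rwa [this] at hlim
  · intro hzero
    have : Sstar = PS Sstar := by
      have := dist_eq_zero.mp hzero
      exact this
    exact ⟨this ▸ (hPS Sstar).1, hSstarM⟩
end

section
/- Let S = Q Λ Qᵀ with Λ having non-increasing diagonal, and fix Λ_o diagonal non-increasing and ε ≥ 0. Define Λ_ε* as the diagonal matrix with entries (Λ_ε*)_{ii} = sign(γ_i)·min{ε, |γ_i|} where γ_i = Λ_{ii} − (Λ_o)_{ii}. Then Λ_ε* minimizes ‖Λ − Λ_o − Λ_ε‖_F over diagonal Λ_ε with ‖Λ_ε‖₂ ≤ ε, and Q(Λ_o + Λ_ε*)Qᵀ is a best Frobenius-norm approximant of S in the set M_ε. -/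
open Matrix

/-!
`sign γ · min ε |γ|` is the projection of `γ` onto `[-ε, ε]`, so the first claim holds
coordinatewise: `(γ - e*)²` is the squared distance `f(γ)` from `γ` to `[-ε, ε]`, a lower bound
for `(γ - e)²` whenever `|e| ≤ ε`.

For the second, put `P = Qᵀ V` and `Λo = diag λ`. Orthogonal invariance of the Frobenius norm
gives `‖S - V (Λo + E) Vᵀ‖² = ∑ᵢⱼ Pᵢⱼ² (dᵢ - λⱼ - eⱼ)² ≥ ∑ᵢⱼ Pᵢⱼ² f(dᵢ - λⱼ)`. The matrix `(Pᵢⱼ²)`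
is doubly stochastic, and since `f` is convex and `d`, `λ` are antitone the cost `f(dᵢ - λⱼ)` is a
Monge array, for which the identity is an optimal transport plan. Hence the right-hand side is at
least `∑ᵢ f(dᵢ - λᵢ) = ‖S - Q (Λo + E*) Qᵀ‖²`.
-/

open Finset

theorem ConvexOn.map_add_map_le_of_le {f : ℝ → ℝ} (hf : ConvexOn ℝ Set.univ f)
    {s x t : ℝ} (hsx : s ≤ x) (hxt : x ≤ t) :
    f x + f (s + t - x) ≤ f s + f t := by
  rcases hsx.eq_or_lt with rfl | hsx'
  · simp
  have hts : 0 < t - s := by linarith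
  set a := (t - x) / (t - s)
  have ha : a * (t - s) = t - x := div_mul_cancel₀ _ hts.ne'
  have ha0 : 0 ≤ a := div_nonneg (by linarith) hts.le
  have ha1 : a ≤ 1 := (div_le_one hts).2 (by linarith)
  have hx := hf.2 (Set.mem_univ s) (Set.mem_univ t) ha0 (sub_nonneg.2 ha1) (by ring)
  have hy := hf.2 (Set.mem_univ s) (Set.mem_univ t) (sub_nonneg.2 ha1) ha0 (by ring)
  simp only [smul_eq_mul] at hx hy
  rw [show a * s + (1 - a) * t = x by linear_combination -ha] at hx
  rw [show (1 - a) * s + a * t = s + t - x by linear_combination ha] at hy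
  linarith

theorem ConvexOn.map_sub_add_map_sub_le {f : ℝ → ℝ} (hf : ConvexOn ℝ Set.univ f)
    {a a' b b' : ℝ} (ha : a' ≤ a) (hb : b' ≤ b) :
    f (a - b) + f (a' - b') ≤ f (a - b') + f (a' - b) := by
  have h := hf.map_add_map_le_of_le (s := a' - b) (x := a - b) (t := a - b')
    (by linarith) (by linarith)
  rw [show a' - b + (a - b') - (a - b) = a' - b' by ring] at h
  linarith

/-- The squared distance from `t` to `[-ε, ε]`. -/
noncomputable def sqDistIcc (ε t : ℝ) : ℝ := max (|t| - ε) 0 ^ 2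

theorem convexOn_sqDistIcc (ε : ℝ) : ConvexOn ℝ Set.univ (sqDistIcc ε) := by
  have h : ConvexOn ℝ Set.univ fun t : ℝ => |t| - ε :=
    (convexOn_univ_norm (E := ℝ)).sub (concaveOn_const ε convex_univ)
  exact (h.sup (convexOn_const 0 convex_univ)).pow (fun _ _ => le_max_right _ _) 2

theorem sqDistIcc_le_sq_sub {ε γ e : ℝ} (he : |e| ≤ ε) : sqDistIcc ε γ ≤ (γ - e) ^ 2 := by
  have h : max (|γ| - ε) 0 ≤ |γ - e| := by
    refine max_le ?_ (abs_nonneg _)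
    have := abs_sub_abs_le_abs_sub γ (γ - e)
    rw [sub_sub_cancel] at this
    linarith
  rw [sqDistIcc, ← sq_abs (γ - e)]
  exact pow_le_pow_left₀ (le_max_right _ _) h 2

theorem sq_sub_sign_mul_min {ε : ℝ} (hε : 0 ≤ ε) (γ : ℝ) :
    (γ - Real.sign γ * min ε |γ|) ^ 2 = sqDistIcc ε γ := by
  rw [sqDistIcc]
  rcases lt_trichotomy γ 0 with h | rfl | h
  · rw [Real.sign_of_neg h, abs_of_neg h]
    rcases le_total ε (-γ) with h' | h'
    · rw [min_eq_left h', max_eq_left (by linarith)]; ring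
    · rw [min_eq_right h', max_eq_right (by linarith)]; ring
  · simp [hε]
  · rw [Real.sign_of_pos h, abs_of_pos h]
    rcases le_total ε γ with h' | h'
    · rw [min_eq_left h', max_eq_left (by linarith)]; ring
    · rw [min_eq_right h', max_eq_right (by linarith)]; ring

def IsMongeOn (N : ℕ) (c : ℕ → ℕ → ℝ) : Prop :=
  ∀ ⦃i i' j j' : ℕ⦄, i ≤ i' → j ≤ j' → i' < N → j' < N → c i j + c i' j' ≤ c i j' + c i' j

namespace IsMongeOn

variable {N : ℕ} {c : ℕ → ℕ → ℝ}

/-- `(c i i - potential c i, potential c j)` is a feasible dual pair for the transport problem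
with cost `c`, tight on the diagonal (`diag_add_potential_le`). -/
noncomputable def potential (c : ℕ → ℕ → ℝ) (j : ℕ) : ℝ :=
  ∑ l ∈ range j, (c (l + 1) (l + 1) - c (l + 1) l)

theorem diag_add_potential_le (hc : IsMongeOn N c) {i j : ℕ} (hi : i < N) (hj : j < N) :
    c i i + potential c j ≤ c i j + potential c i := by
  rcases le_total i j with hij | hji
  · have h : potential c j - potential c i ≤ c i j - c i i := by
      rw [potential, potential, ← sum_Ico_eq_sub _ hij, ← sum_Ico_sub (fun l => c i l) hij]
      refine sum_le_sum fun l hl => ?_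
      have hl := mem_Ico.1 hl
      linarith [hc (i := i) (i' := l + 1) (j := l) (j' := l + 1)
        (by omega) (by omega) (by omega) (by omega)]
    linarith
  · have h : c i i - c i j ≤ potential c i - potential c j := by
      rw [potential, potential, ← sum_Ico_eq_sub _ hji, ← sum_Ico_sub (fun l => c i l) hji]
      refine sum_le_sum fun l hl => ?_
      have hl := mem_Ico.1 hl
      linarith [hc (i := l + 1) (i' := i) (j := l) (j' := l + 1) (by omega) (by omega) hi (by omega)]
    linarith

theorem sum_diag_le_sum_mul (hc : IsMongeOn N c) {B : Matrix (Fin N) (Fin N) ℝ}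
    (hB : B ∈ doublyStochastic ℝ (Fin N)) :
    ∑ i : Fin N, c i i ≤ ∑ i : Fin N, ∑ j : Fin N, B i j * c i j := by
  set φ := potential c
  calc ∑ i : Fin N, c i i
      = ∑ i : Fin N, ∑ j : Fin N, B i j * (c i i - φ i) +
          ∑ i : Fin N, ∑ j : Fin N, B i j * φ j := by
        rw [sum_comm (f := fun i j => B i j * φ j)]
        simp only [← sum_mul, sum_row_of_mem_doublyStochastic hB,
          sum_col_of_mem_doublyStochastic hB, one_mul, sum_sub_distrib]
        ring
    _ = ∑ i : Fin N, ∑ j : Fin N, B i j * (c i i + φ j - φ i) := by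
        simp only [← sum_add_distrib, ← mul_add, sub_add_eq_add_sub]
    _ ≤ ∑ i : Fin N, ∑ j : Fin N, B i j * c i j := by
        gcongr with i _ j _
        · exact nonneg_of_mem_doublyStochastic hB
        · linarith [hc.diag_add_potential_le i.isLt j.isLt]

end IsMongeOn

theorem ConvexOn.sum_map_sub_le_sum_mul_map_sub {N : ℕ} {f : ℝ → ℝ}
    (hf : ConvexOn ℝ Set.univ f) {a b : Fin N → ℝ} (ha : Antitone a) (hb : Antitone b)
    {B : Matrix (Fin N) (Fin N) ℝ} (hB : B ∈ doublyStochastic ℝ (Fin N)) :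
    ∑ i, f (a i - b i) ≤ ∑ i, ∑ j, B i j * f (a i - b j) := by
  let c : ℕ → ℕ → ℝ := fun i j =>
    if h : i < N ∧ j < N then f (a ⟨i, h.1⟩ - b ⟨j, h.2⟩) else 0
  have hc : IsMongeOn N c := fun i i' j j' hii hjj hi' hj' => by
    simp only [c, dif_pos (And.intro (hii.trans_lt hi') (hjj.trans_lt hj')),
      dif_pos (And.intro hi' hj'), dif_pos (And.intro (hii.trans_lt hi') hj'),
      dif_pos (And.intro hi' (hjj.trans_lt hj'))]
    exact hf.map_sub_add_map_sub_le (ha (Fin.mk_le_mk.2 hii)) (hb (Fin.mk_le_mk.2 hjj))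
  simpa [c] using hc.sum_diag_le_sum_mul hB

theorem map_sq_mem_doublyStochastic {n : Type*} [Fintype n] [DecidableEq n]
    {P : Matrix n n ℝ} (hP : P ∈ orthogonalGroup n ℝ) :
    P.map (· ^ 2) ∈ doublyStochastic ℝ n := by
  refine mem_doublyStochastic_iff_sum.2 ⟨fun i j => sq_nonneg _, fun i => ?_, fun j => ?_⟩
  · simpa [mul_apply, sq] using congr_fun₂ ((mem_orthogonalGroup_iff _ _).1 hP) i i
  · simpa [mul_apply, sq] using congr_fun₂ ((mem_orthogonalGroup_iff' _ _).1 hP) j j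

theorem sum_sq_eq_trace_transpose_mul_self {N : ℕ} (A : Matrix (Fin N) (Fin N) ℝ) :
    ∑ i, ∑ j, A i j ^ 2 = trace (Aᵀ * A) := by
  simp only [trace, Matrix.diag, mul_apply, transpose_apply, sq]
  exact sum_comm

theorem frobNorm_mul_mul_of_mem_orthogonalGroup {N : ℕ} {U W : Matrix (Fin N) (Fin N) ℝ}
    (hU : U ∈ orthogonalGroup (Fin N) ℝ) (hW : W ∈ orthogonalGroup (Fin N) ℝ)
    (A : Matrix (Fin N) (Fin N) ℝ) : frobNorm (U * A * W) = frobNorm A := by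
  rw [frobNorm, frobNorm, sum_sq_eq_trace_transpose_mul_self,
    sum_sq_eq_trace_transpose_mul_self]
  congr 1
  calc trace ((U * A * W)ᵀ * (U * A * W)) = trace (Wᵀ * (Aᵀ * (Uᵀ * U) * A) * W) := by
        simp only [transpose_mul, Matrix.mul_assoc]
    _ = trace (Aᵀ * A) := by
        rw [(mem_orthogonalGroup_iff' _ _).1 hU, Matrix.mul_one, trace_mul_cycle,
          ← Matrix.mul_assoc, (mem_orthogonalGroup_iff _ _).1 hW, Matrix.one_mul]

theorem mul_mul_transpose_sub_mul_mul_transpose {n : Type*} [Fintype n] [DecidableEq n]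
    {U W : Matrix n n ℝ} (hU : U ∈ orthogonalGroup n ℝ) (hW : W ∈ orthogonalGroup n ℝ)
    (A B : Matrix n n ℝ) :
    U * A * Uᵀ - W * B * Wᵀ = U * (A * (Uᵀ * W) - (Uᵀ * W) * B) * Wᵀ := by
  simp only [Matrix.mul_sub, Matrix.sub_mul, Matrix.mul_assoc,
    (mem_orthogonalGroup_iff _ _).1 hW, Matrix.mul_one]
  simp only [← Matrix.mul_assoc, (mem_orthogonalGroup_iff _ _).1 hU, Matrix.one_mul]

theorem frobNorm_diagonal {N : ℕ} (v : Fin N → ℝ) :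
    frobNorm (diagonal v) = √(∑ i, v i ^ 2) := by
  simp [frobNorm, diagonal_apply, apply_ite (· ^ 2)]

theorem frobNorm_diagonal_mul_sub_mul_diagonal {N : ℕ} (a b : Fin N → ℝ)
    (P : Matrix (Fin N) (Fin N) ℝ) :
    frobNorm (diagonal a * P - P * diagonal b) = √(∑ i, ∑ j, P i j ^ 2 * (a i - b j) ^ 2) := by
  simp only [frobNorm, Matrix.sub_apply, diagonal_mul, mul_diagonal]
  congr 1
  exact sum_congr rfl fun i _ => sum_congr rfl fun j _ => by ring

/-- Best approximant in the uncertainty set `M_ε`: with `S = Q Λ Qᵀ` (ordered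
spectral decomposition), `Λ_o` diagonal non-increasing, `ε ≥ 0`, and
`(Λ_ε^*)_{ii} = sign(γ_i)·min{ε,|γ_i|}` where `γ_i = Λ_{ii} − (Λ_o)_{ii}`,
the matrix `Λ_ε^*` minimizes `‖Λ − Λ_o − Λ_ε‖_F` over diagonal `Λ_ε` with
`‖Λ_ε‖₂ ≤ ε`, and `Q(Λ_o + Λ_ε^*)Qᵀ` is a best Frobenius approximant of `S`
in `M_ε`. -/
theorem best_approximant_uncertainty {N : ℕ}
    (d Λo : Fin N → ℝ)
    (hd : ∀ i j : Fin N, i ≤ j → d j ≤ d i)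
    (hΛo : ∀ i j : Fin N, i ≤ j → Λo j ≤ Λo i)
    (ε : ℝ) (hε : 0 ≤ ε)
    (Q : Matrix (Fin N) (Fin N) ℝ) (hQ : Q ∈ Matrix.orthogonalGroup (Fin N) ℝ)
    (S : Matrix (Fin N) (Fin N) ℝ) (hS : S = Q * Matrix.diagonal d * Qᵀ)
    (estar : Fin N → ℝ)
    (hestar : ∀ i, estar i = Real.sign (d i - Λo i) * min ε |d i - Λo i|) :
    (∀ e : Fin N → ℝ, (∀ i, |e i| ≤ ε) →
      frobNorm (Matrix.diagonal d - Matrix.diagonal Λo - Matrix.diagonal estar) ≤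
        frobNorm (Matrix.diagonal d - Matrix.diagonal Λo - Matrix.diagonal e)) ∧
    (∀ X ∈ {X : Matrix (Fin N) (Fin N) ℝ |
        ∃ V ∈ Matrix.orthogonalGroup (Fin N) ℝ, ∃ e : Fin N → ℝ,
          (∀ i, |e i| ≤ ε) ∧
          X = V * (Matrix.diagonal Λo + Matrix.diagonal e) * Vᵀ},
      frobNorm (S - Q * (Matrix.diagonal Λo + Matrix.diagonal estar) * Qᵀ) ≤
        frobNorm (S - X)) := by
  have hopt : frobNorm (diagonal d - diagonal Λo - diagonal estar) =
      √(∑ i, sqDistIcc ε (d i - Λo i)) := by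
    simp only [diagonal_sub, frobNorm_diagonal, hestar, sq_sub_sign_mul_min hε]
  refine ⟨fun e he => ?_, ?_⟩
  · rw [hopt, diagonal_sub, diagonal_sub, frobNorm_diagonal]
    exact Real.sqrt_le_sqrt (sum_le_sum fun i _ => sqDistIcc_le_sq_sub (he i))
  · rintro _ ⟨V, hV, e, he, rfl⟩
    have hQt : Qᵀ ∈ orthogonalGroup (Fin N) ℝ := transpose_mem_unitaryGroup_iff.2 hQ
    have hVt : Vᵀ ∈ orthogonalGroup (Fin N) ℝ := transpose_mem_unitaryGroup_iff.2 hV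
    set P := Qᵀ * V
    have hP : P ∈ orthogonalGroup (Fin N) ℝ := mul_mem hQt hV
    have hstar : S - Q * (diagonal Λo + diagonal estar) * Qᵀ =
        Q * (diagonal d - diagonal Λo - diagonal estar) * Qᵀ := by
      rw [hS, sub_sub, ← Matrix.sub_mul, ← Matrix.mul_sub]
    rw [hstar, frobNorm_mul_mul_of_mem_orthogonalGroup hQ hQt, hopt, hS, diagonal_add,
      mul_mul_transpose_sub_mul_mul_transpose hQ hV,
      frobNorm_mul_mul_of_mem_orthogonalGroup hQ hVt, frobNorm_diagonal_mul_sub_mul_diagonal]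
    refine Real.sqrt_le_sqrt ?_
    calc ∑ i, sqDistIcc ε (d i - Λo i)
        ≤ ∑ i, ∑ j, P i j ^ 2 * sqDistIcc ε (d i - Λo j) :=
          (convexOn_sqDistIcc ε).sum_map_sub_le_sum_mul_map_sub hd hΛo
            (map_sq_mem_doublyStochastic hP)
      _ ≤ ∑ i, ∑ j, P i j ^ 2 * (d i - (Λo j + e j)) ^ 2 := by
          gcongr with i _ j _
          rw [← sub_sub]
          exact sqDistIcc_le_sq_sub (he j)
end
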